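/- arXiv:2506.10341 — 2 statements merged into one kernel-verified Lean document; each statement's English description precedes it below -/
import Mathlib

section
/- For a reward-informative LLF problem with constant C_F (i.e., for all hypotheses η, η' and actions a, |r_η(a) − r_{η'}(a)|² ≤ C_F · E_{o∼f_η(a)}[ℓ(a,o,η') − ℓ_η^min(a)]), the ε-transfer eluder dimension of H with respect to the scaled loss C_F·ℓ is at most the ε-eluder dimension of the induced reward class R_H = {r_η : η ∈ H}. -/
/-- `x` is `ε`-transfer dependent on the list of actions `pre`:
every pair of hypotheses whose cumulative expected-excess-verifier-loss
(divergence `D b η' η = E_{o ∼ f_{η'}(b)}[ℓ(b,o,η)] - ℓ_{η'}^min(b)`) over `pre`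
is at most `ε²` must have rewards within `ε` at `x`. -/
def TransferDep {A H : Type*} (r : H → A → ℝ) (D : A → H → H → ℝ)
    (ε : ℝ) (x : A) (pre : List A) : Prop :=
  ∀ η η' : H, (pre.map fun b => D b η' η).sum ≤ ε ^ 2 → |r η x - r η' x| ≤ ε

/-- `x` is `ε`-dependent (in the eluder sense) on `pre` with respect to a reward
class `R`. -/
def EluderDep {A : Type*} (R : Set (A → ℝ)) (ε : ℝ) (x : A) (pre : List A) : Prop :=
  ∀ r r' : A → ℝ, r ∈ R → r' ∈ R →
    (pre.map fun b => (r b - r' b) ^ 2).sum ≤ ε ^ 2 → |r x - r' x| ≤ ε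

/-- The `ε`-transfer eluder dimension: the length of the longest action sequence
each of whose elements is `ε'`-transfer independent of its predecessors, for some
`ε' ≥ ε`. -/
noncomputable def dimTE {A H : Type*} (r : H → A → ℝ) (D : A → H → H → ℝ)
    (ε : ℝ) : ℕ∞ :=
  sSup {n : ℕ∞ | ∃ (l : List A) (ε' : ℝ), ε ≤ ε' ∧ n = l.length ∧
    ∀ pre x suf, l = pre ++ x :: suf → ¬ TransferDep r D ε' x pre}

/-- The `ε`-eluder dimension of a reward class `R`. -/
noncomputable def dimE {A : Type*} (R : Set (A → ℝ)) (ε : ℝ) : ℕ∞ :=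
  sSup {n : ℕ∞ | ∃ (l : List A) (ε' : ℝ), ε ≤ ε' ∧ n = l.length ∧
    ∀ pre x suf, l = pre ++ x :: suf → ¬ EluderDep R ε' x pre}

/-- For a reward-informative LLF problem with constant `C_F`, the `ε`-transfer
eluder dimension with respect to the scaled loss `C_F · ℓ` is at most the
`ε`-eluder dimension of the induced reward class `R_H = {r_η : η ∈ H}`.
Here `Eℓ a η η'` denotes `E_{o ∼ f_η(a)}[ℓ(a,o,η')]` and `ℓmin a η = ℓ_η^min(a)`
is its minimum over hypotheses; the expected excess loss of the scaled verifier
`C_F · ℓ` is `C_F * (Eℓ a η η' - ℓmin a η)`. -/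
theorem stmt5 {A H : Type*} (r : H → A → ℝ)
    (Eℓ : A → H → H → ℝ) (ℓmin : A → H → ℝ)
    (hℓmin : ∀ a η, IsLeast {x : ℝ | ∃ η' : H, x = Eℓ a η η'} (ℓmin a η))
    (CF : ℝ) (hCF : 0 < CF)
    (hRI : ∀ (η η' : H) (a : A),
      |r η a - r η' a| ^ 2 ≤ CF * (Eℓ a η η' - ℓmin a η))
    (ε : ℝ) :
    dimTE r (fun a ηf ηe => CF * (Eℓ a ηf ηe - ℓmin a ηf)) ε ≤
      dimE {f : A → ℝ | ∃ η : H, f = r η} ε := by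
  apply sSup_le_sSup
  rintro n ⟨l, ε', hε, hn, hind⟩
  refine ⟨l, ε', hε, hn, fun pre x suf hl hdep => hind pre x suf hl ?_⟩
  intro η η' hsum
  have key : (pre.map fun b => (r η b - r η' b) ^ 2).sum ≤ ε' ^ 2 := by
    refine le_trans ?_ hsum
    apply List.sum_le_sum
    intro b hb
    show (r η b - r η' b) ^ 2 ≤ CF * (Eℓ b η' η - ℓmin b η')
    rw [← sq_abs, abs_sub_comm]
    exact hRI η' η b
  have := hdep (r η) (r η') ⟨η, rfl⟩ ⟨η', rfl⟩ key
  exact this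
end

section
/- Width-sum bound: let d ≥ 1 and β > 0, and suppose w_1 ≥ w_2 ≥ ... ≥ w_T is a nonincreasing sequence in [0,1] such that for every t and every ε > 0, w_t > ε implies t ≤ (3β/ε² + 1)·d. Then ∑_{t=1}^T w_t ≤ d + 2√(3βdT) + T·ε₀ for any ε₀ ≥ 0 such that terms with w_t ≤ ε₀ are separately bounded; in particular, ∑_{t: w_t > ε₀} w_t ≤ d + 2√(3βdT). -/
/-!
Write `A = 3βd`. The hypothesis at levels `ε ↑ w_t` gives `w_t ≤ √(A/(t-d))` for `t > d`, besides
`w_t ≤ 1`. Both bounds are dominated by the increments of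
`g x = widthPotential A d x = min x d + 2√A √(x-d)`, an antiderivative of `1` on `[0, d]` and of
`√(A/(x-d))` beyond `d`: on `[t-1, t]` its slope is at least `min 1 √(A/(t-d))`. Telescoping gives
`∑ w_t ≤ g T - g 0 ≤ d + 2√(AT)`.
-/

open Finset Real

/-- `Real.sqrt` vanishes on negatives, so this is `x` for `x ≤ d`. -/
noncomputable def widthPotential (A d x : ℝ) : ℝ := min x d + 2 * √A * √(x - d)

section widthPotential

variable {A d : ℝ}

lemma widthPotential_zero (hd : 0 ≤ d) : widthPotential A d 0 = 0 := by
  simp [widthPotential, hd, Real.sqrt_eq_zero_of_nonpos]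

lemma widthPotential_le (hA : 0 ≤ A) (hd : 0 ≤ d) (x : ℝ) :
    widthPotential A d x ≤ d + 2 * √(A * x) := by
  have : √(x - d) ≤ √x := Real.sqrt_le_sqrt (by linarith)
  rw [widthPotential, Real.sqrt_mul hA]
  nlinarith [min_le_right x d, Real.sqrt_nonneg A]

lemma le_two_mul_sqrt_mul_sub {w s : ℝ} (hs : 1 ≤ s) (hw0 : 0 ≤ w) (hw : w * √s ≤ √A) :
    w ≤ 2 * √A * (√s - √(s - 1)) := by
  have hqp : √(s - 1) ≤ √s := Real.sqrt_le_sqrt (by linarith)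
  have hpq : (√s - √(s - 1)) * (√s + √(s - 1)) = 1 := by
    rw [mul_comm, ← sq_sub_sq, Real.sq_sqrt (by linarith), Real.sq_sqrt (by linarith)]; ring
  calc w = w * ((√s - √(s - 1)) * (√s + √(s - 1))) := by rw [hpq, mul_one]
    _ ≤ w * ((√s - √(s - 1)) * (2 * √s)) := by gcongr; linarith
    _ = 2 * (w * √s) * (√s - √(s - 1)) := by ring
    _ ≤ 2 * √A * (√s - √(s - 1)) := by gcongr

lemma le_one_sub_add_two_mul_sqrt_mul {w s : ℝ} (hs0 : 0 ≤ s) (hs1 : s ≤ 1) (hw0 : 0 ≤ w)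
    (hw1 : w ≤ 1) (hw : w * √s ≤ √A) : w ≤ 1 - s + 2 * √A * √s := by
  have hr := Real.sq_sqrt hs0
  nlinarith [mul_le_mul_of_nonneg_right hw (Real.sqrt_nonneg s), Real.sqrt_nonneg s]

lemma le_widthPotential_sub {w x : ℝ} (hw0 : 0 ≤ w) (hw1 : w ≤ 1)
    (hwA : d < x → w ≤ √(A / (x - d))) :
    w ≤ widthPotential A d x - widthPotential A d (x - 1) := by
  rcases le_or_gt x d with hxd | hdx
  · simp [widthPotential, hxd, Real.sqrt_eq_zero_of_nonpos, (by linarith : x - 1 ≤ d), hw1]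
  have hw : w * √(x - d) ≤ √A := by
    have hs : 0 < √(x - d) := Real.sqrt_pos.2 (by linarith)
    rw [← le_div_iff₀ hs, ← Real.sqrt_div' A (by linarith)]
    exact hwA hdx
  rw [widthPotential, widthPotential, min_eq_right hdx.le, sub_right_comm]
  rcases le_or_gt (d + 1) x with hx1 | hx1
  · rw [min_eq_right (by linarith)]
    linarith [le_two_mul_sqrt_mul_sub (by linarith) hw0 hw]
  · rw [min_eq_left (by linarith), Real.sqrt_eq_zero_of_nonpos (by linarith : x - d - 1 ≤ 0)]
    linarith [le_one_sub_add_two_mul_sqrt_mul (by linarith) (by linarith) hw0 hw1 hw]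

end widthPotential

lemma le_sqrt_div_of_forall_lt {w c A : ℝ} (hc : 0 < c)
    (h : ∀ ε, 0 < ε → ε < w → ε ^ 2 * c ≤ A) : w ≤ √(A / c) :=
  le_of_forall_lt_imp_le_of_dense fun ε hε => by
    rcases le_or_gt ε 0 with h0 | h0
    · exact h0.trans (Real.sqrt_nonneg _)
    · exact Real.le_sqrt_of_sq_le ((le_div_iff₀ hc).2 (h ε h0 hε))

lemma sum_Icc_le_sub_of_le_sub {u : ℕ → ℝ} {f : ℝ → ℝ} (T : ℕ)
    (h : ∀ t ∈ Icc 1 T, u t ≤ f t - f (t - 1)) : ∑ t ∈ Icc 1 T, u t ≤ f T - f 0 := by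
  induction T with
  | zero => simp
  | succ T ih =>
    rw [sum_Icc_succ_top (by omega)]
    have := h (T + 1) (by simp)
    have := ih fun t ht => h t (Icc_subset_Icc_right (by omega) ht)
    push_cast at *
    rw [add_sub_cancel_right] at this
    linarith

theorem stmt15_general (d β : ℝ) (hd : 1 ≤ d) (hβ : 0 < β) (T : ℕ)
    (w : ℕ → ℝ)
    (hw01 : ∀ t ∈ Finset.Icc 1 T, w t ∈ Set.Icc (0 : ℝ) 1)
    (hkey : ∀ t ∈ Finset.Icc 1 T, ∀ ε : ℝ, 0 < ε → ε < w t →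
      (t : ℝ) ≤ (3 * β / ε ^ 2 + 1) * d)
    (ε₀ : ℝ) (hε₀ : 0 ≤ ε₀) :
    (∑ t ∈ Finset.Icc 1 T, w t ≤
      d + 2 * Real.sqrt (3 * β * d * T) + T * ε₀) ∧
    (∑ t ∈ (Finset.Icc 1 T).filter (fun t => ε₀ < w t), w t ≤
      d + 2 * Real.sqrt (3 * β * d * T)) := by
  have hA : 0 ≤ 3 * β * d := by positivity
  have hd0 : 0 ≤ d := by linarith
  have hstep : ∀ t ∈ Icc 1 T, w t ≤
      widthPotential (3 * β * d) d t - widthPotential (3 * β * d) d (t - 1) := by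
    refine fun t ht => le_widthPotential_sub (hw01 t ht).1 (hw01 t ht).2 fun hdt =>
      le_sqrt_div_of_forall_lt (by linarith) fun ε hε hεw => ?_
    have ht_le := hkey t ht ε hε hεw
    rw [add_mul, div_mul_eq_mul_div, ← sub_le_iff_le_add, le_div_iff₀ (by positivity)] at ht_le
    linarith
  have htotal : ∑ t ∈ Icc 1 T, w t ≤ d + 2 * √(3 * β * d * T) := by
    have htele := sum_Icc_le_sub_of_le_sub T hstep
    rw [widthPotential_zero hd0, sub_zero] at htele
    exact htele.trans (widthPotential_le hA hd0 T)
  refine ⟨htotal.trans (le_add_of_nonneg_right (by positivity)), ?_⟩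
  exact (sum_le_sum_of_subset_of_nonneg (filter_subset _ _)
    fun t ht _ => (hw01 t ht).1).trans htotal

/-- Width-sum bound: if `w_1 ≥ ... ≥ w_T` is a nonincreasing `[0,1]` sequence
such that `w_t > ε` implies `t ≤ (3β/ε² + 1)·d`, then for any `ε₀ ≥ 0`,
`∑_{t=1}^T w_t ≤ d + 2√(3βdT) + T·ε₀`, and in particular
`∑_{t : w_t > ε₀} w_t ≤ d + 2√(3βdT)`. -/
theorem stmt15 (d β : ℝ) (hd : 1 ≤ d) (hβ : 0 < β) (T : ℕ)
    (w : ℕ → ℝ)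
    (hw01 : ∀ t ∈ Finset.Icc 1 T, w t ∈ Set.Icc (0 : ℝ) 1)
    (hmono : ∀ s t : ℕ, 1 ≤ s → s ≤ t → t ≤ T → w t ≤ w s)
    (hkey : ∀ t ∈ Finset.Icc 1 T, ∀ ε : ℝ, 0 < ε → ε < w t →
      (t : ℝ) ≤ (3 * β / ε ^ 2 + 1) * d)
    (ε₀ : ℝ) (hε₀ : 0 ≤ ε₀) :
    (∑ t ∈ Finset.Icc 1 T, w t ≤
      d + 2 * Real.sqrt (3 * β * d * T) + T * ε₀) ∧
    (∑ t ∈ (Finset.Icc 1 T).filter (fun t => ε₀ < w t), w t ≤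
      d + 2 * Real.sqrt (3 * β * d * T)) :=
  stmt15_general d β hd hβ T w hw01 hkey ε₀ hε₀
end
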